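/- arXiv:2106.05175 — 5 statements merged into one kernel-verified Lean document; each statement's English description precedes it below -/
import Mathlib

section
/- Let G be a connected graph and e an edge of G that is not a cut-edge (i.e., G with e deleted is still connected). Then any cycle of minimum length among all cycles of G containing e is a min-cycle. -/
open SimpleGraph

/-- A cycle `c` in `G` is a min-cycle if for every two vertices `u,v` on the cycle,
the distance between `u` and `v` in the graph consisting of the edges of the cycle
(i.e. the distance along the cycle) equals their distance in `G`. -/
def IsMinCycle {V : Type*} {G : SimpleGraph V} {a : V} (c : G.Walk a a) : Prop :=
  c.IsCycle ∧ ∀ u ∈ c.support, ∀ v ∈ c.support,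
    (SimpleGraph.fromEdgeSet {e | e ∈ c.edges}).dist u v = G.dist u v

/-!
Let `H` be the graph formed by the edges of `c`; distances in `H` dominate those in `G`.
Conversely, induct on `d = dist_G(u, v)` and take a shortest `G`-path `P` from `u` to `v`.
If `P` passes through a third vertex `w` of `c`, the triangle inequality in `H` and induction
conclude. Otherwise `P` meets `c` only in `u` and `v`: of the two arcs of `c` between `u` and
`v`, the one containing `e` closes up with `P` to a cycle through `e`, so by minimality of `c`
the other arc is no longer than `P`.
-/

namespace SimpleGraph

variable {V : Type*} {G : SimpleGraph V}

lemma Walk.IsPath.start_notMem_support_tail {u v : V} {p : G.Walk u v} (hp : p.IsPath) :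
    u ∉ p.support.tail := by
  have hnodup := hp.support_nodup
  rw [← p.cons_tail_support] at hnodup
  exact (List.nodup_cons.1 hnodup).1

section FromEdgeSet

variable {s : Set (Sym2 V)} {x y : V}

lemma Walk.edges_subset_edgeSet_fromEdgeSet (q : G.Walk x y) (hq : ∀ f ∈ q.edges, f ∈ s) :
    ∀ f ∈ q.edges, f ∈ (fromEdgeSet s).edgeSet := fun f hf => by
  rw [edgeSet_fromEdgeSet]
  exact ⟨hq f hf, G.not_isDiag_of_mem_edgeSet (q.edges_subset_edgeSet hf)⟩

lemma Walk.reachable_fromEdgeSet (q : G.Walk x y) (hq : ∀ f ∈ q.edges, f ∈ s) :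
    (fromEdgeSet s).Reachable x y :=
  (q.transfer _ (q.edges_subset_edgeSet_fromEdgeSet hq)).reachable

lemma Walk.dist_fromEdgeSet_le_length (q : G.Walk x y) (hq : ∀ f ∈ q.edges, f ∈ s) :
    (fromEdgeSet s).dist x y ≤ q.length := by
  simpa using dist_le (q.transfer _ (q.edges_subset_edgeSet_fromEdgeSet hq))

end FromEdgeSet

/-- The alternative `A.length ≤ P.length` covers the case where `A` and `P` are the same
edge, so that they do not close up to a cycle. -/
lemma Walk.length_le_or_length_le_of_isCycle_append {e : Sym2 V} {u v : V}
    {A : G.Walk u v} {B : G.Walk v u} (hAB : (A.append B).IsCycle) (heA : e ∈ A.edges)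
    (hmin : ∀ (b : V) (c' : G.Walk b b), c'.IsCycle → e ∈ c'.edges →
      A.length + B.length ≤ c'.length)
    {P : G.Walk u v} (hP : P.IsPath) (huv : u ≠ v)
    (hPA : ∀ w ∈ P.support, w ∈ A.support → w = u ∨ w = v) :
    A.length ≤ P.length ∨ B.length ≤ P.length := by
  have hPpos : 0 < P.length := Nat.pos_of_ne_zero fun h => huv (P.eq_of_length_eq_zero h)
  by_cases hlong : 1 < A.length ∨ 1 < P.length
  · have hA : A.IsPath := hAB.isPath_of_append_left (B.not_nil_of_ne huv.symm)
    have hdisj : A.support.tail.Disjoint P.reverse.support.tail := by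
      intro w hwA hwP
      have hwP' : w ∈ P.support := by
        simpa using List.mem_of_mem_tail hwP
      rcases hPA w hwP' (List.mem_of_mem_tail hwA) with rfl | rfl
      · exact hA.start_notMem_support_tail hwA
      · exact hP.reverse.start_notMem_support_tail hwP
    have hcycle : (A.append P.reverse).IsCycle :=
      hA.isCycle_append hP.reverse hdisj (by simpa using hlong)
    have := hmin u _ hcycle (by simp [heA])
    simp only [Walk.length_append, Walk.length_reverse] at this
    omega
  · omega

section CycleGraph

variable [DecidableEq V] {a : V} {c : G.Walk a a}

lemma Walk.reachable_fromEdgeSet_edges {x y : V} (hx : x ∈ c.support) (hy : y ∈ c.support) :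
    (fromEdgeSet {f | f ∈ c.edges}).Reachable x y :=
  have reach_of_mem {w : V} (hw : w ∈ c.support) :
      (fromEdgeSet {f | f ∈ c.edges}).Reachable a w :=
    (c.takeUntil w hw).reachable_fromEdgeSet fun _ hf => c.edges_takeUntil_subset_edges hw hf
  (reach_of_mem hx).symm.trans (reach_of_mem hy)

lemma Walk.dist_le_dist_fromEdgeSet_edges {x y : V} (hx : x ∈ c.support) (hy : y ∈ c.support) :
    G.dist x y ≤ (fromEdgeSet {f | f ∈ c.edges}).dist x y :=
  (reachable_fromEdgeSet_edges hx hy).dist_anti <| (fromEdgeSet_le G).2 fun _ hf =>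
    c.edges_subset_edgeSet hf.1

lemma Walk.IsCycle.dist_fromEdgeSet_edges_le_of_isPath {e : Sym2 V} (hc : c.IsCycle)
    (hec : e ∈ c.edges)
    (hmin : ∀ (b : V) (c' : G.Walk b b), c'.IsCycle → e ∈ c'.edges → c.length ≤ c'.length)
    {u v : V} (hu : u ∈ c.support) (hv : v ∈ c.support) (huv : u ≠ v)
    {P : G.Walk u v} (hP : P.IsPath) (hPc : ∀ w ∈ P.support, w ∈ c.support → w = u ∨ w = v) :
    (fromEdgeSet {f | f ∈ c.edges}).dist u v ≤ P.length := by
  set c' := c.rotate u hu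
  have hv' : v ∈ c'.support := (c.mem_support_rotate_iff u hu).2 hv
  set A := c'.takeUntil v hv'
  set B := c'.dropUntil v hv'
  have hAB : A.append B = c' := c'.take_spec hv'
  have hcycle : (A.append B).IsCycle := hAB ▸ hc.rotate hu
  have hlen : A.length + B.length = c.length := by
    rw [← Walk.length_append, hAB, Walk.length_rotate]
  have hedges : ∀ f, f ∈ A.edges ∨ f ∈ B.edges ↔ f ∈ c.edges := fun f => by
    rw [← List.mem_append, ← Walk.edges_append, hAB, (c.rotate_edges u hu).mem_iff]
  have hdistA : (fromEdgeSet {f | f ∈ c.edges}).dist u v ≤ A.length :=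
    A.dist_fromEdgeSet_le_length fun f hf => (hedges f).1 (.inl hf)
  have hdistB : (fromEdgeSet {f | f ∈ c.edges}).dist u v ≤ B.length := by
    rw [dist_comm]
    exact B.dist_fromEdgeSet_le_length fun f hf => (hedges f).1 (.inr hf)
  have hPA : ∀ w ∈ P.support, w ∈ A.support → w = u ∨ w = v := fun w hw hwA =>
    hPc w hw ((c.mem_support_rotate_iff u hu).1 (c'.support_takeUntil_subset_support hv' hwA))
  have hPB : ∀ w ∈ P.support, w ∈ B.reverse.support → w = u ∨ w = v := fun w hw hwB =>
    hPc w hw ((c.mem_support_rotate_iff u hu).1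
      (c'.support_dropUntil_subset_support hv' (by simpa using hwB)))
  have hminAB : ∀ (b : V) (c' : G.Walk b b), c'.IsCycle → e ∈ c'.edges →
      A.length + B.length ≤ c'.length := fun b c' h h' => hlen.trans_le (hmin b c' h h')
  rcases (hedges e).2 hec with heA | heB
  · have := Walk.length_le_or_length_le_of_isCycle_append hcycle heA hminAB hP huv hPA
    omega
  · have hcycle' : (B.reverse.append A.reverse).IsCycle := by
      rw [← Walk.reverse_append]
      exact hcycle.reverse
    have := Walk.length_le_or_length_le_of_isCycle_append hcycle' (by simpa using heB)
      (by simpa only [Walk.length_reverse, Nat.add_comm B.length] using hminAB) hP huv hPB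
    simp only [Walk.length_reverse] at this
    omega

lemma Walk.IsCycle.dist_fromEdgeSet_edges_le_dist {e : Sym2 V} (hG : G.Preconnected)
    (hc : c.IsCycle) (hec : e ∈ c.edges)
    (hmin : ∀ (b : V) (c' : G.Walk b b), c'.IsCycle → e ∈ c'.edges → c.length ≤ c'.length)
    {u v : V} (hu : u ∈ c.support) (hv : v ∈ c.support) :
    (fromEdgeSet {f | f ∈ c.edges}).dist u v ≤ G.dist u v := by
  induction hn : G.dist u v using Nat.strong_induction_on generalizing u v with
  | _ n ih =>
  obtain ⟨P, hP, hPlen⟩ := (hG u v).exists_path_of_dist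
  by_cases hmid : ∃ w ∈ P.support, w ∈ c.support ∧ w ≠ u ∧ w ≠ v
  · obtain ⟨w, hwP, hwc, hwu, hwv⟩ := hmid
    have htake : G.dist u w < n := hn ▸ hPlen ▸
      (dist_le _).trans_lt (P.length_takeUntil_lt_length hwP hwv)
    have hdrop : G.dist w v < n := hn ▸ hPlen ▸
      (dist_le _).trans_lt (P.length_dropUntil_lt_length hwP hwu)
    calc (fromEdgeSet {f | f ∈ c.edges}).dist u v
        ≤ (fromEdgeSet {f | f ∈ c.edges}).dist u w
          + (fromEdgeSet {f | f ∈ c.edges}).dist w v :=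
          (reachable_fromEdgeSet_edges hu hwc).dist_triangle_left v
      _ ≤ (P.takeUntil w hwP).length + (P.dropUntil w hwP).length :=
          Nat.add_le_add ((ih _ htake hu hwc rfl).trans (dist_le _))
            ((ih _ hdrop hwc hv rfl).trans (dist_le _))
      _ = n := by rw [← Walk.length_append, P.take_spec hwP, hPlen, hn]
  · obtain rfl | huv := eq_or_ne u v
    · simp
    push Not at hmid
    refine hn ▸ hPlen ▸ hc.dist_fromEdgeSet_edges_le_of_isPath hec hmin hu hv huv hP ?_
    intro w hwP hwc
    exact (eq_or_ne w u).imp_right (hmid w hwP hwc)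

end CycleGraph

end SimpleGraph

theorem min_length_cycle_is_min_cycle_general {V : Type*}
    (G : SimpleGraph V) (hG : G.Connected)
    (e : Sym2 V)
    (a : V) (c : G.Walk a a) (hc : c.IsCycle) (hec : e ∈ c.edges)
    (hmin : ∀ (b : V) (c' : G.Walk b b), c'.IsCycle → e ∈ c'.edges →
      c.length ≤ c'.length) :
    IsMinCycle c := by
  classical
  exact ⟨hc, fun u hu v hv => le_antisymm
    (hc.dist_fromEdgeSet_edges_le_dist hG.preconnected hec hmin hu hv)
    (Walk.dist_le_dist_fromEdgeSet_edges hu hv)⟩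

/-- If `e` is an edge of a connected graph `G` that is not a cut-edge, then any cycle of
minimum length among all cycles of `G` containing `e` is a min-cycle. -/
theorem min_length_cycle_is_min_cycle {V : Type*} [Fintype V]
    (G : SimpleGraph V) (hG : G.Connected)
    (e : Sym2 V) (he : e ∈ G.edgeSet)
    (hnotcut : (G.deleteEdges {e}).Connected)
    (a : V) (c : G.Walk a a) (hc : c.IsCycle) (hec : e ∈ c.edges)
    (hmin : ∀ (b : V) (c' : G.Walk b b), c'.IsCycle → e ∈ c'.edges →
      c.length ≤ c'.length) :
    IsMinCycle c :=
  min_length_cycle_is_min_cycle_general G hG e a c hc hec hmin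
end

section
/- Let C be a min-cycle in a connected graph G and let v be a vertex of C. Then there exists an edge e of C opposite v — that is, an edge of C whose distance in C from v (the minimum of the C-distances from v to its two endpoints) is at least that of every other edge of C — such that deleting e from G does not change the distance from v to any vertex: d_{G−e}(v,x) = d_G(v,x) for every vertex x. -/
/-!
Let `e = s(p, q)` be an edge of `c` at maximal cycle-distance `k` from `v`. Building shortest
walks from `v` one edge at a time, deleting `e` can only lengthen them if `e` is the last edge of
a shortest walk to its far endpoint `q`, with `d(v, q) = d(v, p) + 1 = k + 1`; so it suffices
to reach `q` in `G - e` within `k + 1` steps, and the arc of `c` from `v` to `q` avoiding `e`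
does this. Indeed the vertex at position `j` of a cycle of length `n` through `v` is at
cycle-distance `min j (n - j)` from `v`, so if that arc were longer than `k + 1`, its edge
between positions `k + 1` and `k + 2` would be further from `v` than `e`. Finally, on a
min-cycle, cycle-distances are distances in `G`.
-/

open SimpleGraph

/-- The distance (along the cycle `c`) from the vertex `v` to an edge, i.e. the minimum of
the cycle-distances from `v` to the two endpoints of the edge. -/
noncomputable def cycleEdgeDistFrom {V : Type*} {G : SimpleGraph V} {a : V}
    (c : G.Walk a a) (v : V) : Sym2 V → ℕ :=
  Sym2.lift ⟨fun x y =>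
      min ((SimpleGraph.fromEdgeSet {e | e ∈ c.edges}).dist v x)
          ((SimpleGraph.fromEdgeSet {e | e ∈ c.edges}).dist v y),
    fun x y => min_comm _ _⟩

namespace List

variable {α : Type*} {l : List α}

lemma Nodup.getElem_notMem_take (hl : l.Nodup) {i : ℕ} (hi : i < l.length) :
    l[i] ∉ l.take i := by
  intro h
  obtain ⟨j, hj, hji⟩ := getElem_of_mem h
  rw [getElem_take] at hji
  have := (hl.getElem_inj_iff).mp hji
  rw [length_take] at hj
  omega

lemma Nodup.getElem_notMem_drop (hl : l.Nodup) {i : ℕ} (hi : i < l.length) :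
    l[i] ∉ l.drop (i + 1) := by
  intro h
  obtain ⟨j, hj, hji⟩ := getElem_of_mem h
  rw [getElem_drop] at hji
  have := (hl.getElem_inj_iff).mp hji
  omega

end List

namespace SimpleGraph

variable {V : Type*} {G : SimpleGraph V}

lemma Reachable.le_add_dist {φ : V → ℕ} (hφ : ∀ x y, G.Adj x y → φ y ≤ φ x + 1)
    {u w : V} (h : G.Reachable u w) : φ w ≤ φ u + G.dist u w := by
  obtain ⟨p, hp⟩ := h.exists_walk_length_eq_dist
  rw [← hp]
  clear hp h
  induction p with
  | nil => simp
  | cons hadj p ih =>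
    have := hφ _ _ hadj
    rw [Walk.length_cons]
    omega

lemma Reachable.exists_adj_dist_eq_add_one {v y : V} (h : G.Reachable v y) (hne : v ≠ y) :
    ∃ z, G.Reachable v z ∧ G.Adj z y ∧ G.dist v y = G.dist v z + 1 := by
  obtain ⟨P, hP⟩ := h.exists_walk_length_eq_dist
  have hP0 : ¬P.Nil := fun h0 => hne h0.eq
  have hadj := P.adj_penultimate hP0
  refine ⟨P.penultimate, ⟨P.dropLast⟩, hadj, le_antisymm ?_ ?_⟩
  · calc G.dist v y ≤ G.dist v P.penultimate + G.dist P.penultimate y :=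
          hadj.reachable.dist_triangle_right v
      _ = G.dist v P.penultimate + 1 := by rw [dist_eq_one_iff_adj.mpr hadj]
  · rw [← hP, ← Walk.length_dropLast_add_one hP0]
    exact Nat.add_le_add_right (dist_le _) 1

lemma Walk.edges_subset_edgeSet_fromEdgeSet_s2 {s : Set (Sym2 V)} {u w : V} {p : G.Walk u w}
    (hp : ∀ f ∈ p.edges, f ∈ s) : ∀ f ∈ p.edges, f ∈ (fromEdgeSet s).edgeSet := by
  intro f hf
  simpa [hp f hf] using G.not_isDiag_of_mem_edgeSet (p.edges_subset_edgeSet hf)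

lemma dist_fromEdgeSet_le {s : Set (Sym2 V)} {u w : V} {p : G.Walk u w}
    (hp : ∀ f ∈ p.edges, f ∈ s) : (fromEdgeSet s).dist u w ≤ p.length := by
  simpa using dist_le (p.transfer _ (p.edges_subset_edgeSet_fromEdgeSet_s2 hp))

lemma dist_deleteEdges_singleton_eq {v x : V} {e : Sym2 V}
    (he : ∀ p q, e = s(p, q) → G.dist v q = G.dist v p + 1 →
      ∃ W : (G.deleteEdges {e}).Walk v q, W.length ≤ G.dist v q)
    (hx : G.Reachable v x) : (G.deleteEdges {e}).dist v x = G.dist v x := by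
  suffices ∃ W : (G.deleteEdges {e}).Walk v x, W.length ≤ G.dist v x by
    obtain ⟨W, hW⟩ := this
    exact le_antisymm ((dist_le W).trans hW) (W.reachable.dist_anti (G.deleteEdges_le _))
  induction hn : G.dist v x using Nat.strong_induction_on generalizing x with
  | _ n ih =>
  by_cases hvx : v = x
  · subst hvx
    exact ⟨Walk.nil, by simp⟩
  obtain ⟨z, hz, hzx, hdist⟩ := hx.exists_adj_dist_eq_add_one hvx
  obtain ⟨W, hW⟩ := ih _ (by omega) hz rfl
  by_cases hez : e = s(z, x)
  · exact hn ▸ he z x hez hdist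
  · refine ⟨W.concat (deleteEdges_adj.mpr ⟨hzx, by simpa using Ne.symm hez⟩), ?_⟩
    rw [Walk.length_concat]
    omega

namespace Walk

section Rotate

variable [DecidableEq V] {u v : V} (c : G.Walk u u) (hv : v ∈ c.support)

lemma mem_edges_rotate_iff {f : Sym2 V} : f ∈ (c.rotate v hv).edges ↔ f ∈ c.edges :=
  (c.rotate_edges v hv).perm.mem_iff

lemma setOf_mem_edges_rotate : {e | e ∈ (c.rotate v hv).edges} = {e | e ∈ c.edges} :=
  Set.ext fun _ => c.mem_edges_rotate_iff hv

end Rotate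

lemma idxOf_support_start [DecidableEq V] {u w : V} (p : G.Walk u w) : p.support.idxOf u = 0 := by
  rw [← p.cons_tail_support, List.idxOf_cons_self]

lemma mem_edges_of_mem_edges_take {u w : V} {p : G.Walk u w} {n : ℕ} {f : Sym2 V}
    (hf : f ∈ (p.take n).edges) : f ∈ p.edges :=
  List.mem_of_mem_take (by rwa [edges_take] at hf)

variable {v : V} {c : G.Walk v v}

lemma IsCycle.idxOf_getVert [DecidableEq V] (hc : c.IsCycle) {i : ℕ} (hi : i < c.length) :
    c.support.idxOf (c.getVert i) = i := by
  have hmem := c.getVert_mem_support i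
  have hj : c.getVert (c.support.idxOf (c.getVert i)) = c.getVert i := c.getVert_support_idxOf hmem
  have hjn : c.support.idxOf (c.getVert i) < c.length := by
    have := List.idxOf_lt_length_of_mem hmem
    rw [length_support] at this
    refine lt_of_le_of_ne (by omega) fun hn => ?_
    rw [hn, getVert_length, eq_comm, hc.getVert_endpoint_iff hi.le] at hj
    obtain rfl : i = 0 := by omega
    rw [getVert_zero, idxOf_support_start] at hn
    omega
  exact hc.getVert_injOn' (by rw [Set.mem_ofPred_eq]; omega) (by rw [Set.mem_ofPred_eq]; omega)
    hj

lemma dist_fromEdgeSet_getVert_le (c : G.Walk v v) (j : ℕ) :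
    (fromEdgeSet {e | e ∈ c.edges}).dist v (c.getVert j) ≤ min j (c.length - j) := by
  refine le_min ?_ ?_
  · exact (dist_fromEdgeSet_le fun _ => mem_edges_of_mem_edges_take).trans (by simp [take_length])
  · refine (dist_fromEdgeSet_le (p := (c.drop j).reverse) fun f hf => ?_).trans
      (by simp [drop_length])
    rw [edges_reverse, List.mem_reverse, edges_drop] at hf
    exact List.mem_of_mem_drop hf

lemma IsCycle.le_dist_fromEdgeSet_getVert (hc : c.IsCycle) {j : ℕ} (hj : j ≤ c.length) :
    min j (c.length - j) ≤ (fromEdgeSet {e | e ∈ c.edges}).dist v (c.getVert j) := by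
  classical
  let φ (x : V) : ℕ := min (c.support.idxOf x) (c.length - c.support.idxOf x)
  have hφv : φ v = 0 := by simp [φ, idxOf_support_start]
  have hφ : ∀ i ≤ c.length, φ (c.getVert i) = min i (c.length - i) := by
    intro i hi
    rcases hi.lt_or_eq with hi | rfl
    · simp only [φ, hc.idxOf_getVert hi]
    · rw [getVert_length, hφv]
      omega
  have hstep : ∀ x y, (fromEdgeSet {e | e ∈ c.edges}).Adj x y → φ y ≤ φ x + 1 := by
    intro x y hxy
    obtain ⟨i, hi, hxy⟩ := (c.mk_mem_edges_iff_exists).mp (fromEdgeSet_adj _ |>.mp hxy).1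
    have h₁ := hφ i hi.le
    have h₂ := hφ (i + 1) hi
    rcases Sym2.eq_iff.mp hxy with ⟨rfl, rfl⟩ | ⟨rfl, rfl⟩ <;> omega
  have hreach : (fromEdgeSet {e | e ∈ c.edges}).Reachable v (c.getVert j) :=
    ⟨(c.take j).transfer _ <|
      edges_subset_edgeSet_fromEdgeSet_s2 fun _ => mem_edges_of_mem_edges_take⟩
  have := hreach.le_add_dist hstep
  rwa [hφ j hj, hφv, zero_add] at this

lemma IsCycle.dist_fromEdgeSet_getVert (hc : c.IsCycle) {j : ℕ} (hj : j ≤ c.length) :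
    (fromEdgeSet {e | e ∈ c.edges}).dist v (c.getVert j) = min j (c.length - j) :=
  le_antisymm (c.dist_fromEdgeSet_getVert_le j) (hc.le_dist_fromEdgeSet_getVert hj)

lemma IsCycle.exists_walk_deleteEdges_of_forall_le (hc : c.IsCycle) {e : Sym2 V}
    (he : e ∈ c.edges)
    (hmax : ∀ f ∈ c.edges, cycleEdgeDistFrom c v f ≤ cycleEdgeDistFrom c v e) {p q : V}
    (hpq : e = s(p, q))
    (hdist : (fromEdgeSet {e | e ∈ c.edges}).dist v q =
      (fromEdgeSet {e | e ∈ c.edges}).dist v p + 1) :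
    ∃ W : (G.deleteEdges {e}).Walk v q,
      W.length ≤ (fromEdgeSet {e | e ∈ c.edges}).dist v q := by
  obtain ⟨i, hi, rfl⟩ := List.getElem_of_mem he
  have hi' : i < c.length := by rwa [length_edges] at hi
  have hD := fun j (hj : j ≤ c.length) => hc.dist_fromEdgeSet_getVert hj
  have hmax' : ∀ j < c.length,
      min (min j (c.length - j)) (min (j + 1) (c.length - (j + 1))) ≤
        min (min i (c.length - i)) (min (i + 1) (c.length - (i + 1))) := by
    intro j hj
    have := hmax _ (List.getElem_mem (l := c.edges) (by rwa [length_edges]))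
    simpa only [getElem_edges, cycleEdgeDistFrom, Sym2.lift_mk, hD _ hj.le, hD _ hj,
      hD _ hi'.le, hD _ hi'] using this
  have hnodup := hc.edges_nodup
  rw [getElem_edges] at hpq
  rcases Sym2.eq_iff.mp hpq with ⟨rfl, rfl⟩ | ⟨rfl, rfl⟩
  · rw [hD _ hi', hD _ hi'.le] at hdist
    rw [hD _ hi']
    refine ⟨(c.drop (i + 1)).reverse.toDeleteEdge _ ?_, ?_⟩
    · rw [edges_reverse, List.mem_reverse, edges_drop]
      exact hnodup.getElem_notMem_drop hi
    · -- the edge after `e` is no further from `v` than `e`, so the arc behind `e` is short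
      have := hmax' (i + 1)
      simp only [length_transfer, length_reverse, drop_length]
      omega
  · rw [hD _ hi', hD _ hi'.le] at hdist
    rw [hD _ hi'.le]
    refine ⟨(c.take i).toDeleteEdge _ ?_, ?_⟩
    · rw [edges_take]
      exact hnodup.getElem_notMem_take hi
    · have := hmax' (i - 1)
      simp only [length_transfer, take_length]
      omega

end Walk

end SimpleGraph

theorem opposite_edge_not_needed_general {V : Type*}
    (G : SimpleGraph V) (hG : G.Connected)
    (a : V) (c : G.Walk a a) (hmc : IsMinCycle c)
    (v : V) (hv : v ∈ c.support) :
    ∃ e ∈ c.edges,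
      (∀ f ∈ c.edges, cycleEdgeDistFrom c v f ≤ cycleEdgeDistFrom c v e) ∧
      ∀ x : V, (G.deleteEdges {e}).dist v x = G.dist v x := by
  classical
  obtain ⟨hcyc, hmin⟩ := hmc
  obtain ⟨e, he, hmax⟩ := c.edges.toFinset.exists_max_image (cycleEdgeDistFrom c v)
    (List.toFinset_nonempty_iff _ |>.mpr (Walk.edges_eq_nil.not.mpr hcyc.not_nil))
  simp only [List.mem_toFinset] at he hmax
  refine ⟨e, he, hmax, fun x => dist_deleteEdges_singleton_eq ?_ (hG v x)⟩
  rintro p q rfl hpq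
  have hp := c.fst_mem_support_of_mem_edges he
  have hq := c.snd_mem_support_of_mem_edges he
  rw [← hmin v hv p hp, ← hmin v hv q hq, ← Walk.setOf_mem_edges_rotate c hv] at hpq
  rw [← hmin v hv q hq, ← Walk.setOf_mem_edges_rotate c hv]
  refine (hcyc.rotate hv).exists_walk_deleteEdges_of_forall_le
    ((c.mem_edges_rotate_iff hv).mpr he) (fun f hf => ?_) rfl hpq
  simp only [cycleEdgeDistFrom, Walk.setOf_mem_edges_rotate c hv] at hmax ⊢
  exact hmax f ((c.mem_edges_rotate_iff hv).mp hf)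

/-- For any vertex `v` of a min-cycle `c` of a connected graph `G` there is an edge `e` of
`c` opposite `v` (at maximal cycle-distance from `v` among edges of `c`) whose deletion
does not change the distance from `v` to any vertex. -/
theorem opposite_edge_not_needed {V : Type*} [Fintype V]
    (G : SimpleGraph V) (hG : G.Connected)
    (a : V) (c : G.Walk a a) (hmc : IsMinCycle c)
    (v : V) (hv : v ∈ c.support) :
    ∃ e ∈ c.edges,
      (∀ f ∈ c.edges, cycleEdgeDistFrom c v f ≤ cycleEdgeDistFrom c v e) ∧
      ∀ x : V, (G.deleteEdges {e}).dist v x = G.dist v x :=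
  opposite_edge_not_needed_general G hG a c hmc v hv
end

section
/- Suppose α > 2(n−1) and the strategy profile is a Nash equilibrium whose induced graph G contains a cycle. Then the girth of G (the length of its shortest cycle) is at least 2α/(n−1) + 2. -/
open SimpleGraph Finset

/-- The undirected graph induced by a strategy profile `buy`:
`u` and `v` are adjacent iff they are distinct and one of them buys an edge to the other. -/
def inducedGraph {n : ℕ} (buy : Fin n → Finset (Fin n)) : SimpleGraph (Fin n) where
  Adj u v := u ≠ v ∧ (u ∈ buy v ∨ v ∈ buy u)
  symm := ⟨fun u v h => ⟨h.1.symm, h.2.symm⟩⟩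
  loopless := ⟨fun v h => h.1 rfl⟩

/-- The connection cost `D(v) = Σ_{u ≠ v} d(v,u)` of a vertex. -/
noncomputable def connCost {n : ℕ} (buy : Fin n → Finset (Fin n)) (v : Fin n) : ℕ :=
  ∑ u ∈ Finset.univ \ {v}, (inducedGraph buy).dist v u

/-- The total cost of vertex `v`: building cost plus connection cost. -/
noncomputable def gameCost {n : ℕ} (α : ℝ) (buy : Fin n → Finset (Fin n)) (v : Fin n) : ℝ :=
  α * (buy v).card + connCost buy v

/-- A strategy profile is a Nash equilibrium if its graph is connected (otherwise some
vertex has infinite cost and can improve by deviating) and no vertex can strictly decrease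
its cost by changing its strategy; a deviation yielding a disconnected graph has infinite
cost, so only deviations yielding connected graphs are constrained. -/
def IsNashEq {n : ℕ} (α : ℝ) (buy : Fin n → Finset (Fin n)) : Prop :=
  (inducedGraph buy).Connected ∧
  ∀ (v : Fin n) (s : Finset (Fin n)), v ∉ s →
    (inducedGraph (Function.update buy v s)).Connected →
    gameCost α buy v ≤ gameCost α (Function.update buy v s) v

/-!
Let `C` be a cycle of length `k` and let `v` buy the edge `vu` of `C`. If `v` deletes it, the
graph stays connected and `u` stays within distance `k - 1` of `v`. Only the vertices `x` all of
whose shortest paths from `v` start with `vu` get farther from `v`, each by at most `k - 2`, so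
the Nash condition gives `α ≤ (k - 2) |A(v, u)|` for the set `A(v, u)` of these vertices.
No edge is bought by both endpoints, as dropping one of the purchases would save `α` for free.
If some vertex buys both of its cycle edges, its two sets `A` are disjoint, whence
`2α ≤ (k - 2)(n - 1)`. Otherwise all edges of `C` are bought in the same direction around it.
A fixed vertex `x` then lies in at most `(k - 1) / 2` of the `k` sets `A(v, u)`: walking around
`C`, the distance to `x` drops at each such edge and does not rise on the edge before, while the
total change is zero. Summing over the cycle and using `k ≤ n` gives again
`2α ≤ (k - 2)(n - 1)`.
-/

namespace ZMod

variable {k : ℕ}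

lemma natCast_inj_of_lt {a b : ℕ} (ha : a < k) (hb : b < k) : (a : ZMod k) = b ↔ a = b :=
  ⟨fun h => by simpa [val_natCast_of_lt ha, val_natCast_of_lt hb] using congrArg val h,
    congrArg _⟩

lemma sub_one_ne_add_one (hk : 3 ≤ k) (i : ZMod k) : i - 1 ≠ i + 1 := by
  intro h
  have := (natCast_inj_of_lt (show 2 < k by omega) (show 0 < k by omega)).mp
    (by push_cast; linear_combination -h)
  omega

variable [NeZero k]

lemma forall_of_imp_add_one {p : ZMod k → Prop} {i₀ : ZMod k} (h₀ : p i₀)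
    (hstep : ∀ i, p i → p (i + 1)) (i : ZMod k) : p i := by
  have key : ∀ m : ℕ, p (i₀ + m) := by
    intro m
    induction m with
    | zero => simpa using h₀
    | succ m ih => simpa [add_assoc] using hstep _ ih
  simpa using key (i - i₀).val

lemma sum_sub_add_one_eq_zero (t : ZMod k → ℤ) : ∑ i, (t (i + 1) - t i) = 0 := by
  rw [Finset.sum_sub_distrib, sub_eq_zero]
  exact Fintype.sum_equiv (Equiv.addRight 1) _ _ fun _ => rfl

/-- The steps of `t` around the cycle add up to zero, and none exceeds a unit rise. -/
lemma card_le_card_filter_add_one_eq (t : ZMod k → ℕ) (A : Finset (ZMod k))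
    (hdrop : ∀ i ∈ A, t i = t (i + 1) + 1) (hrise : ∀ i, t (i + 1) ≤ t i + 1) :
    #A ≤ #{i | t (i + 1) = t i + 1} := by
  set U : Finset (ZMod k) := {i | t (i + 1) = t i + 1}
  have hstep (i : ZMod k) :
      ((t (i + 1) : ℤ) - t i) ≤ (if i ∈ U then 1 else 0) - (if i ∈ A then 1 else 0) := by
    have hU : i ∈ U ↔ t (i + 1) = t i + 1 := by simp [U]
    simp only [hU]
    have := hrise i
    by_cases hA : i ∈ A
    · have := hdrop i hA
      split_ifs <;> omega
    · split_ifs <;> omega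
  have := (sum_sub_add_one_eq_zero (fun i => (t i : ℤ))).symm.le.trans
    (Finset.sum_le_sum fun i _ => hstep i)
  simp only [Finset.sum_sub_distrib, Finset.sum_ite_mem, Finset.univ_inter, Finset.sum_const,
    nsmul_eq_mul, mul_one] at this
  omega

lemma two_mul_card_le_of_drop (t : ZMod k → ℕ) (A : Finset (ZMod k))
    (hdrop : ∀ i ∈ A, t i = t (i + 1) + 1) (hprev : ∀ i ∈ A, t i ≤ t (i - 1))
    (hrise : ∀ i, t (i + 1) ≤ t i + 1) : 2 * #A ≤ k - 1 := by
  set U : Finset (ZMod k) := {i | t (i + 1) = t i + 1}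
  have hcard : #A ≤ #U := card_le_card_filter_add_one_eq t A hdrop hrise
  have hAU : Disjoint A U := Finset.disjoint_left.mpr fun i hA hU => by
    have := hdrop i hA
    have : t (i + 1) = t i + 1 := (Finset.mem_filter.mp hU).2
    omega
  rcases A.eq_empty_or_nonempty with rfl | ⟨i₀, hi₀⟩
  · simp
  have hcover : A ∪ U ≠ Finset.univ := by
    intro hcover
    -- a drop not preceded by a rise is preceded by another such drop, so every step would drop
    have hall : ∀ i, -i ∈ A := by
      refine forall_of_imp_add_one (i₀ := -i₀) (by simpa using hi₀) fun j hj => ?_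
      have hprevU : -j - 1 ∉ U := fun hU => by
        have := hprev _ hj
        have : t (-j - 1 + 1) = t (-j - 1) + 1 := (Finset.mem_filter.mp hU).2
        rw [sub_add_cancel] at this
        omega
      rw [neg_add']
      exact (Finset.mem_union.mp (hcover ▸ Finset.mem_univ (-j - 1))).resolve_right hprevU
    have hU : U = ∅ := Finset.eq_empty_of_forall_notMem fun i hi =>
      Finset.disjoint_left.mp hAU (by simpa using hall (-i)) hi
    have := Finset.card_pos.mpr ⟨i₀, hi₀⟩
    rw [hU, Finset.card_empty] at hcard
    omega
  have hlt := Finset.card_lt_card (Finset.ssubset_univ_iff.mpr hcover)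
  rw [Finset.card_union_of_disjoint hAU, Finset.card_univ, ZMod.card] at hlt
  omega

end ZMod

namespace SimpleGraph

variable {V : Type*} {G : SimpleGraph V}

lemma Walk.getVert_mod_length {a : V} (c : G.Walk a a) {m : ℕ} (hm : m ≤ c.length) :
    c.getVert (m % c.length) = c.getVert m := by
  rcases hm.lt_or_eq with hlt | rfl
  · rw [Nat.mod_eq_of_lt hlt]
  · rw [Nat.mod_self, Walk.getVert_zero, Walk.getVert_length]

lemma Walk.IsCycle.exists_injective_zmod {a : V} {c : G.Walk a a} (hc : c.IsCycle) :
    ∃ f : ZMod c.length → V, Function.Injective f ∧ ∀ i, G.Adj (f i) (f (i + 1)) := by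
  have : NeZero c.length := ⟨by have := hc.three_le_length; omega⟩
  refine ⟨fun i => c.getVert i.val, fun i j hij => ZMod.val_injective _ ?_, fun i => ?_⟩
  · exact hc.getVert_injOn' (by have := i.val_lt; simp; omega)
      (by have := j.val_lt; simp; omega) hij
  · change G.Adj (c.getVert i.val) (c.getVert (i + 1).val)
    rw [ZMod.val_add, ZMod.val_one_eq_one_mod, Nat.add_mod_mod,
      c.getVert_mod_length i.val_lt]
    exact c.adj_getVert_succ i.val_lt

section Cyclic

variable {k : ℕ} {f : ZMod k → V}

lemma cyclic_edge_ne (hk : 3 ≤ k) (hf : Function.Injective f) (i : ZMod k) {m : ℕ}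
    (hm : m + 1 < k) : s(f (i + 1 + m), f (i + 1 + m + 1)) ≠ s(f i, f (i + 1)) := by
  rw [Ne, Sym2.eq_iff]
  rintro (⟨h, -⟩ | ⟨h, h'⟩)
  · have := (ZMod.natCast_inj_of_lt hm (show 0 < k by omega)).mp
      (by push_cast; linear_combination hf h)
    omega
  · have hm0 := (ZMod.natCast_inj_of_lt (show m < k by omega) (show 0 < k by omega)).mp
      (by push_cast; linear_combination hf h)
    subst hm0
    have := (ZMod.natCast_inj_of_lt (show 2 < k by omega) (show 0 < k by omega)).mp
      (by push_cast; linear_combination hf h')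
    omega

lemma exists_walk_deleteEdges_of_cyclic (hk : 3 ≤ k) (hf : Function.Injective f)
    (hadj : ∀ i, G.Adj (f i) (f (i + 1))) (i : ZMod k) :
    ∃ p : (G.deleteEdges {s(f i, f (i + 1))}).Walk (f (i + 1)) (f i), p.length + 1 = k := by
  have : NeZero k := ⟨by omega⟩
  set H := G.deleteEdges {s(f i, f (i + 1))}
  have key : ∀ m < k, ∃ p : H.Walk (f (i + 1)) (f (i + 1 + m)), p.length = m := by
    intro m
    induction m with
    | zero => exact fun _ => ⟨Walk.nil.copy rfl (by simp), by simp⟩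
    | succ m ih =>
      intro hm
      obtain ⟨p, hp⟩ := ih (by omega)
      have hadj' : H.Adj (f (i + 1 + m)) (f (i + 1 + m + 1)) :=
        (deleteEdges_adj ..).mpr ⟨hadj _, cyclic_edge_ne hk hf i hm⟩
      exact ⟨(p.concat hadj').copy rfl (by push_cast; ring_nf), by simp [hp]⟩
  obtain ⟨p, hp⟩ := key (k - 1) (by omega)
  have hend : i + 1 + ((k - 1 : ℕ) : ZMod k) = i := by
    rw [Nat.cast_sub (by omega), ZMod.natCast_self]
    ring
  exact ⟨p.copy rfl (by rw [hend]), by rw [Walk.length_copy, hp]; omega⟩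

end Cyclic

lemma Walk.dist_add_one_le_length_of_mem_support [DecidableEq V] {a b m : V} (p : G.Walk a b)
    (hm : m ∈ p.support) (hma : m ≠ a) : G.dist m b + 1 ≤ p.length := by
  have hlen := congrArg Walk.length (p.take_spec hm)
  rw [Walk.length_append] at hlen
  have hpos : 0 < (p.takeUntil m hm).length :=
    Nat.pos_of_ne_zero fun h => hma (Walk.eq_of_length_eq_zero h).symm
  have := dist_le (p.dropUntil m hm)
  omega

lemma dist_deleteEdges_le_of_dist_le {a x w w' : V} (hwa : w ≠ a) (hax : G.Reachable a x)
    (h : G.dist a x ≤ G.dist w x) : (G.deleteEdges {s(w, w')}).dist a x ≤ G.dist a x := by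
  classical
  obtain ⟨p, hp⟩ := hax.exists_walk_length_eq_dist
  have hnot : s(w, w') ∉ p.edges := fun he => by
    have := p.dist_add_one_le_length_of_mem_support (p.fst_mem_support_of_mem_edges he) hwa
    omega
  calc (G.deleteEdges {s(w, w')}).dist a x
      ≤ (p.toDeleteEdges {s(w, w')} (by rintro e he rfl; exact hnot he)).length := dist_le _
    _ = G.dist a x := by rw [Walk.length_transfer, hp]

variable {v u x : V}

lemma dist_eq_dist_add_one_of_lt_dist_deleteEdges (hG : G.Connected) (hvu : G.Adj v u)
    (hx : G.dist v x < (G.deleteEdges {s(v, u)}).dist v x) : G.dist v x = G.dist u x + 1 := by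
  have htri : G.dist v x ≤ G.dist v u + G.dist u x := hG.dist_triangle
  rw [dist_eq_one_iff_adj.mpr hvu] at htri
  have hlt : G.dist u x < G.dist v x := by
    by_contra! hle
    rw [Sym2.eq_swap] at hx
    exact (dist_deleteEdges_le_of_dist_le hvu.ne' (hG.preconnected v x) hle).not_gt hx
  omega

lemma dist_le_dist_of_lt_dist_deleteEdges {w : V} (hG : G.Connected) (hvw : G.Adj v w)
    (hwu : w ≠ u) (hx : G.dist v x < (G.deleteEdges {s(v, u)}).dist v x) :
    G.dist v x ≤ G.dist w x := by
  by_contra! hlt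
  have hw : (G.deleteEdges {s(v, u)}).dist w x ≤ G.dist w x :=
    dist_deleteEdges_le_of_dist_le hvw.ne (hG.preconnected w x) hlt.le
  have hvw' : (G.deleteEdges {s(v, u)}).Adj v w := by
    simp [deleteEdges_adj, hvw, hwu, hvw.ne']
  have htri := hvw'.reachable.dist_triangle_left x
  rw [dist_eq_one_iff_adj.mpr hvw'] at htri
  omega

lemma dist_deleteEdges_add_one_le (hG : G.Connected) (hvu : G.Adj v u)
    (hreach : (G.deleteEdges {s(v, u)}).Reachable v u)
    (hx : G.dist v x < (G.deleteEdges {s(v, u)}).dist v x) :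
    (G.deleteEdges {s(v, u)}).dist v x + 1 ≤ (G.deleteEdges {s(v, u)}).dist v u + G.dist v x := by
  have hux := dist_eq_dist_add_one_of_lt_dist_deleteEdges hG hvu hx
  have hu : (G.deleteEdges {s(v, u)}).dist u x ≤ G.dist u x :=
    dist_deleteEdges_le_of_dist_le hvu.ne (hG.preconnected u x) (by omega)
  have := hreach.dist_triangle_left x
  omega

section DistIncrease

variable [Fintype V]

noncomputable def distIncreaseSet (G : SimpleGraph V) (v u : V) : Finset V :=
  {x | G.dist v x < (G.deleteEdges {s(v, u)}).dist v x}

lemma disjoint_distIncreaseSet {u₁ u₂ : V} (hG : G.Connected)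
    (hvu₂ : G.Adj v u₂) (hne : u₁ ≠ u₂) :
    Disjoint (G.distIncreaseSet v u₁) (G.distIncreaseSet v u₂) := by
  refine Finset.disjoint_left.mpr fun x hx₁ hx₂ => ?_
  simp only [distIncreaseSet, Finset.mem_filter, Finset.mem_univ, true_and] at hx₁ hx₂
  have := dist_le_dist_of_lt_dist_deleteEdges hG hvu₂ hne.symm hx₁
  have := dist_eq_dist_add_one_of_lt_dist_deleteEdges hG hvu₂ hx₂
  omega

lemma card_distIncreaseSet_add_card_le [DecidableEq V] {u₁ u₂ : V} (hG : G.Connected)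
    (hvu₂ : G.Adj v u₂) (hne : u₁ ≠ u₂) :
    #(G.distIncreaseSet v u₁) + #(G.distIncreaseSet v u₂) ≤ Fintype.card V - 1 := by
  rw [← Finset.card_union_of_disjoint (disjoint_distIncreaseSet hG hvu₂ hne),
    ← Finset.card_univ, ← Finset.card_erase_of_mem (Finset.mem_univ v)]
  refine Finset.card_le_card fun x hx => Finset.mem_erase.mpr ⟨?_, Finset.mem_univ x⟩
  rintro rfl
  simp [distIncreaseSet] at hx

lemma sum_dist_deleteEdges_sub_le (hG : G.Connected) (hvu : G.Adj v u)
    (hreach : (G.deleteEdges {s(v, u)}).Reachable v u) :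
    ∑ x, (((G.deleteEdges {s(v, u)}).dist v x : ℝ) - G.dist v x) ≤
      (((G.deleteEdges {s(v, u)}).dist v u : ℝ) - 1) * #(G.distIncreaseSet v u) := by
  calc ∑ x, (((G.deleteEdges {s(v, u)}).dist v x : ℝ) - G.dist v x)
      ≤ ∑ x, if G.dist v x < (G.deleteEdges {s(v, u)}).dist v x
          then ((G.deleteEdges {s(v, u)}).dist v u : ℝ) - 1 else 0 := by
        refine Finset.sum_le_sum fun x _ => ?_
        split_ifs with hx
        · have := dist_deleteEdges_add_one_le hG hvu hreach hx
          have : ((G.deleteEdges {s(v, u)}).dist v x : ℝ) + 1 ≤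
              (G.deleteEdges {s(v, u)}).dist v u + G.dist v x := by exact_mod_cast this
          linarith
        · exact sub_nonpos.mpr (by exact_mod_cast not_lt.mp hx)
    _ = _ := by
        rw [← Finset.sum_filter, Finset.sum_const, nsmul_eq_mul, mul_comm]
        rfl

end DistIncrease

end SimpleGraph

section Game

variable {n : ℕ} {buy : Fin n → Finset (Fin n)} {α : ℝ} {v u : Fin n}

lemma connCost_eq_sum (buy : Fin n → Finset (Fin n)) (v : Fin n) :
    connCost buy v = ∑ x, (inducedGraph buy).dist v x := by
  rw [connCost, Finset.sum_eq_sum_sdiff_singleton_add (Finset.mem_univ v), dist_self, add_zero]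

lemma inducedGraph_adj_of_mem (hlegal : ∀ v, v ∉ buy v) (hu : u ∈ buy v) :
    (inducedGraph buy).Adj v u :=
  ⟨fun h => hlegal v (h ▸ hu), Or.inr hu⟩

lemma inducedGraph_update_erase_of_mem (hvu : v ∈ buy u) :
    inducedGraph (Function.update buy v ((buy v).erase u)) = inducedGraph buy := by
  ext a b
  simp only [inducedGraph, Function.update_apply]
  grind

lemma inducedGraph_update_erase_of_notMem (hvu : v ∉ buy u) :
    inducedGraph (Function.update buy v ((buy v).erase u)) =
      (inducedGraph buy).deleteEdges {s(v, u)} := by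
  ext a b
  simp only [inducedGraph, deleteEdges_adj, Function.update_apply, Set.mem_singleton_iff,
    Sym2.eq_iff]
  grind

namespace IsNashEq

variable (hNE : IsNashEq α buy) (hlegal : ∀ v, v ∉ buy v)
include hNE hlegal

lemma le_connCost_update_erase_sub (hu : u ∈ buy v)
    (hconn : (inducedGraph (Function.update buy v ((buy v).erase u))).Connected) :
    α ≤ (connCost (Function.update buy v ((buy v).erase u)) v : ℝ) - connCost buy v := by
  have h := hNE.2 v _ (by simp [hlegal v]) hconn
  simp only [gameCost, Function.update_self, Finset.card_erase_of_mem hu,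
    Nat.cast_sub (Finset.card_pos.mpr ⟨u, hu⟩)] at h
  push_cast at h
  linarith

variable (hα0 : 0 < α)
include hα0

lemma notMem_buy_of_mem_buy (hu : u ∈ buy v) : v ∉ buy u := by
  intro hv
  have h := hNE.le_connCost_update_erase_sub hlegal hu
    (by rw [inducedGraph_update_erase_of_mem hv]; exact hNE.1)
  simp only [connCost, inducedGraph_update_erase_of_mem hv, sub_self] at h
  linarith

variable {k : ℕ}

lemma le_mul_card_distIncreaseSet (hu : u ∈ buy v)
    (p : ((inducedGraph buy).deleteEdges {s(v, u)}).Walk u v) (hp : p.length + 1 ≤ k) :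
    α ≤ ((k : ℝ) - 2) * #((inducedGraph buy).distIncreaseSet v u) := by
  have hgraph := inducedGraph_update_erase_of_notMem (hNE.notMem_buy_of_mem_buy hlegal hα0 hu)
  have hvu := inducedGraph_adj_of_mem hlegal hu
  have hreach : ((inducedGraph buy).deleteEdges {s(v, u)}).Reachable v u := ⟨p.reverse⟩
  have hconn := hNE.1.connected_delete_edge_of_not_isBridge
    (isBridge_iff.not.mpr (not_not.mpr hreach))
  have hsave := hNE.le_connCost_update_erase_sub hlegal hu (hgraph ▸ hconn)
  rw [connCost_eq_sum, connCost_eq_sum, hgraph] at hsave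
  push_cast at hsave
  rw [← Finset.sum_sub_distrib] at hsave
  have hdist : (((inducedGraph buy).deleteEdges {s(v, u)}).dist v u : ℝ) ≤ k - 1 := by
    have := dist_comm.trans_le (dist_le p)
    have : (((inducedGraph buy).deleteEdges {s(v, u)}).dist v u : ℝ) + 1 ≤ k := by
      exact_mod_cast (by omega)
    linarith
  calc α ≤ _ := hsave
    _ ≤ _ := sum_dist_deleteEdges_sub_le hNE.1 hvu hreach
    _ ≤ _ := mul_le_mul_of_nonneg_right (by linarith) (Nat.cast_nonneg _)

lemma two_mul_le_of_mem_buy_of_mem_buy {u₁ u₂ : Fin n} (hu₁ : u₁ ∈ buy v)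
    (hu₂ : u₂ ∈ buy v) (hne : u₁ ≠ u₂)
    (p₁ : ((inducedGraph buy).deleteEdges {s(v, u₁)}).Walk u₁ v)
    (hp₁ : p₁.length + 1 ≤ k)
    (p₂ : ((inducedGraph buy).deleteEdges {s(v, u₂)}).Walk u₂ v)
    (hp₂ : p₂.length + 1 ≤ k) :
    2 * α ≤ ((k : ℝ) - 2) * ((n : ℝ) - 1) := by
  have h₁ := hNE.le_mul_card_distIncreaseSet hlegal hα0 hu₁ p₁ hp₁
  have h₂ := hNE.le_mul_card_distIncreaseSet hlegal hα0 hu₂ p₂ hp₂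
  have hcard := card_distIncreaseSet_add_card_le hNE.1 (inducedGraph_adj_of_mem hlegal hu₂) hne
  rw [Fintype.card_fin] at hcard
  have hcard' : (#((inducedGraph buy).distIncreaseSet v u₁) : ℝ) +
      #((inducedGraph buy).distIncreaseSet v u₂) ≤ n - 1 := by
    have := (Nat.cast_le (α := ℝ)).mpr hcard
    push_cast [Nat.cast_sub (Nat.one_le_of_lt v.pos)] at this
    exact this
  have hk2 : (0 : ℝ) ≤ k - 2 := by
    by_contra! hk2
    nlinarith [(Nat.cast_nonneg _ : (0 : ℝ) ≤ #((inducedGraph buy).distIncreaseSet v u₁))]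
  nlinarith [mul_le_mul_of_nonneg_left hcard' hk2]

variable {f : ZMod k → Fin n}

lemma two_mul_le_of_forall_mem_buy (hk : 3 ≤ k) (hf : Function.Injective f)
    (hbuy : ∀ i, f (i + 1) ∈ buy (f i)) : 2 * α ≤ ((k : ℝ) - 2) * ((n : ℝ) - 1) := by
  have : NeZero k := ⟨by omega⟩
  set G := inducedGraph buy
  have hadj (i : ZMod k) : G.Adj (f i) (f (i + 1)) := inducedGraph_adj_of_mem hlegal (hbuy i)
  have hkn : k ≤ n := by simpa using Fintype.card_le_of_injective f hf
  let r (i : ZMod k) (x : Fin n) : Prop :=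
    G.dist (f i) x < (G.deleteEdges {s(f i, f (i + 1))}).dist (f i) x
  set A : ZMod k → Finset (Fin n) := fun i => G.distIncreaseSet (f i) (f (i + 1))
  have hsave (i : ZMod k) : α ≤ ((k : ℝ) - 2) * #(A i) := by
    obtain ⟨p, hp⟩ := exists_walk_deleteEdges_of_cyclic hk hf hadj i
    exact hNE.le_mul_card_distIncreaseSet hlegal hα0 (hbuy i) p hp.le
  have hcount (x : Fin n) : 2 * #{i | r i x} ≤ k - 1 := by
    refine ZMod.two_mul_card_le_of_drop (fun i => G.dist (f i) x) _
      (fun i hi => dist_eq_dist_add_one_of_lt_dist_deleteEdges hNE.1 (hadj i)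
        (Finset.mem_filter.mp hi).2)
      (fun i hi => dist_le_dist_of_lt_dist_deleteEdges hNE.1
        (by simpa using (hadj (i - 1)).symm) (hf.ne (ZMod.sub_one_ne_add_one hk i))
        (Finset.mem_filter.mp hi).2)
      (fun i => ?_)
    have := (hadj i).symm.reachable.dist_triangle_left x
    rw [dist_eq_one_iff_adj.mpr (hadj i).symm] at this
    omega
  have htotal : 2 * ∑ i, #(A i) ≤ k * (n - 1) :=
    calc 2 * ∑ i, #(A i) = ∑ x, 2 * #{i | r i x} := by
          rw [← Finset.mul_sum]
          exact congrArg _ (Finset.sum_card_bipartiteAbove_eq_sum_card_bipartiteBelow r)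
      _ ≤ ∑ _x : Fin n, (k - 1) := Finset.sum_le_sum fun x _ => hcount x
      _ = n * (k - 1) := by simp
      _ ≤ k * (n - 1) := by rw [Nat.mul_sub_one, Nat.mul_sub_one, Nat.mul_comm]; omega
  have htotal' : 2 * ∑ i, (#(A i) : ℝ) ≤ k * ((n : ℝ) - 1) := by
    have := (Nat.cast_le (α := ℝ)).mpr htotal
    push_cast [Nat.cast_sub (by omega : 1 ≤ n)] at this
    exact this
  have hsum : (k : ℝ) * α ≤ ((k : ℝ) - 2) * ∑ i, (#(A i) : ℝ) :=
    calc (k : ℝ) * α = ∑ _i : ZMod k, α := by simp [ZMod.card]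
      _ ≤ _ := Finset.sum_le_sum fun i _ => hsave i
      _ = _ := (Finset.mul_sum ..).symm
  have hk2 : (0 : ℝ) ≤ k - 2 := by
    have : (3 : ℝ) ≤ k := by exact_mod_cast hk
    linarith
  refine le_of_mul_le_mul_left ?_ (by positivity : (0 : ℝ) < k)
  nlinarith [mul_le_mul_of_nonneg_left htotal' hk2]

lemma two_mul_le_of_cyclic (hk : 3 ≤ k) (hf : Function.Injective f)
    (hadj : ∀ i, (inducedGraph buy).Adj (f i) (f (i + 1))) :
    2 * α ≤ ((k : ℝ) - 2) * ((n : ℝ) - 1) := by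
  have : NeZero k := ⟨by omega⟩
  by_cases hdouble : ∃ i, f i ∈ buy (f (i + 1)) ∧ f (i + 1 + 1) ∈ buy (f (i + 1))
  · obtain ⟨i, h₁, h₂⟩ := hdouble
    obtain ⟨p₁, hp₁⟩ := exists_walk_deleteEdges_of_cyclic hk hf hadj i
    obtain ⟨p₂, hp₂⟩ := exists_walk_deleteEdges_of_cyclic hk hf hadj (i + 1)
    refine hNE.two_mul_le_of_mem_buy_of_mem_buy hlegal hα0 h₁ h₂ (hf.ne ?_)
      (p₁.reverse.mapLe (by rw [Sym2.eq_swap])) (by simpa using hp₁.le) p₂ hp₂.le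
    simpa using ZMod.sub_one_ne_add_one hk (i + 1)
  push Not at hdouble
  by_cases hfwd : ∀ i, f (i + 1) ∈ buy (f i)
  · exact hNE.two_mul_le_of_forall_mem_buy hlegal hα0 hk hf hfwd
  push Not at hfwd
  obtain ⟨i₀, hi₀⟩ := hfwd
  -- no vertex buys both of its cycle edges, so one edge bought backwards forces all of them
  have hbwd : ∀ i, f i ∈ buy (f (i + 1)) :=
    ZMod.forall_of_imp_add_one ((hadj i₀).2.resolve_right hi₀) fun i hi =>
      (hadj (i + 1)).2.resolve_right (hdouble i hi)
  refine hNE.two_mul_le_of_forall_mem_buy hlegal hα0 hk (hf.comp neg_injective) fun i => ?_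
  have h := hbwd (-(i + 1))
  rwa [show -(i + 1) + 1 = -i by ring] at h

end IsNashEq

end Game

theorem girth_lower_bound_general (n : ℕ) (α : ℝ) (hα0 : 0 < α)
    (buy : Fin n → Finset (Fin n)) (hlegal : ∀ v, v ∉ buy v)
    (hNE : IsNashEq α buy) :
    ∀ (a : Fin n) (c : (inducedGraph buy).Walk a a), c.IsCycle →
      2 * α / ((n : ℝ) - 1) + 2 ≤ (c.length : ℝ) := by
  intro a c hc
  have hk := hc.three_le_length
  have : NeZero c.length := ⟨by omega⟩
  obtain ⟨f, hf, hadj⟩ := hc.exists_injective_zmod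
  have hkn : c.length ≤ n := by simpa using Fintype.card_le_of_injective f hf
  have hn : (0 : ℝ) < n - 1 := by
    have : (3 : ℝ) ≤ n := by exact_mod_cast hk.trans hkn
    linarith
  have := hNE.two_mul_le_of_cyclic hlegal hα0 hk hf hadj
  rw [div_add' _ _ _ hn.ne', div_le_iff₀ hn]
  linarith

/-- Suppose `α > 2(n-1)` and the strategy profile is a Nash equilibrium whose induced
graph contains a cycle. Then the girth of the induced graph is at least `2α/(n-1) + 2`,
i.e. every cycle has length at least `2α/(n-1) + 2`. -/
theorem girth_lower_bound (n : ℕ) (α : ℝ) (hn : 2 ≤ n) (hα0 : 0 < α)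
    (buy : Fin n → Finset (Fin n)) (hlegal : ∀ v, v ∉ buy v)
    (hα : α > 2 * ((n : ℝ) - 1))
    (hNE : IsNashEq α buy)
    (hcyc : ∃ (a : Fin n) (c : (inducedGraph buy).Walk a a), c.IsCycle) :
    ∀ (a : Fin n) (c : (inducedGraph buy).Walk a a), c.IsCycle →
      2 * α / ((n : ℝ) - 1) + 2 ≤ (c.length : ℝ) :=
  girth_lower_bound_general n α hα0 buy hlegal hNE
end

section
/- Let G be a connected graph, let C = v_0, v_1, …, v_{k−1}, v_k = v_0 be a cycle in G, let e_i denote the edge {v_i, v_{i+1}} (indices mod k), and let u be any vertex of G. Then the number of indices i ∈ {0,…,k−1} for which every shortest path from v_i to u uses the edge e_i (equivalently, d_{G−e_i}(v_i,u) > d_G(v_i,u)) is at most (k−1)/2. -/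
/-!
Let `g i = d(v_i, u)` along the cycle, with `B` the set of indices in question. The increments
`g (i+1) - g i` are at most `1` and sum to `0`. If `i ∈ B`, then `g (i+1) = g i - 1`, and
`v_{i-1}` is not closer to `u` than `v_i`, since a shortest path through `v_{i-1}` would avoid
`e_i`. At an index where `g` is maximal, either that index or its predecessor lies outside `B`
and has a non-positive increment. Summing the increments, `0 ≤ -|B| + 0 + (k - |B| - 1)`.
-/

open SimpleGraph Finset

lemma Fin.val_finRotate_eq_or {n : ℕ} (i : Fin n) :
    (finRotate n i : ℕ) = i + 1 ∨ ((i : ℕ) + 1 = n ∧ (finRotate n i : ℕ) = 0) := by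
  cases n with
  | zero => exact i.elim0
  | succ n =>
    rw [coe_finRotate]
    split_ifs with h
    · exact .inr ⟨by simp [h], rfl⟩
    · exact .inl rfl

lemma Finset.two_mul_card_add_one_le_card_of_sum_eq_zero {α : Type*} [Fintype α]
    [DecidableEq α] {f : α → ℤ} {B : Finset α} {j : α} (hsum : ∑ i, f i = 0)
    (hle : ∀ i, f i ≤ 1) (hB : ∀ i ∈ B, f i = -1) (hjB : j ∉ B) (hj : f j ≤ 0) :
    2 * #B + 1 ≤ Fintype.card α := by
  have hpoint : ∀ i, f i ≤ 1 - 2 * (if i ∈ B then 1 else 0) - (if i = j then 1 else 0) := by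
    intro i
    split_ifs with hiB hij hij
    · exact absurd (hij ▸ hiB) hjB
    · linarith [hB i hiB]
    · subst hij; linarith
    · linarith [hle i]
  have := sum_le_sum fun i (_ : i ∈ univ) => hpoint i
  simp only [sum_sub_distrib, ← mul_sum, sum_boole, hsum, sum_const, card_univ, nsmul_eq_mul,
    mul_one, filter_mem_eq_inter, univ_inter, filter_eq', mem_univ, if_true, card_singleton,
    Nat.cast_one] at this
  omega

lemma Equiv.Perm.exists_notMem_apply_le {α : Type*} [Finite α] [Nonempty α] (σ : Equiv.Perm α)
    {g : α → ℤ} {B : Finset α} (hdrop : ∀ i ∈ B, g (σ i) < g i)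
    (hpred : ∀ i ∈ B, g i ≤ g (σ.symm i)) : ∃ j ∉ B, g (σ j) ≤ g j := by
  obtain ⟨m, hmax⟩ := Finite.exists_max g
  by_cases hm : m ∈ B
  · have hdrop' : ¬ g (σ (σ.symm m)) < g (σ.symm m) := by
      rw [Equiv.apply_symm_apply]; exact (hmax _).not_gt
    exact ⟨σ.symm m, fun h => hdrop' (hdrop _ h), by simpa using hpred m hm⟩
  · exact ⟨m, hm, hmax _⟩

lemma Equiv.Perm.two_mul_card_add_one_le_card {α : Type*} [Fintype α] [DecidableEq α]
    [Nonempty α] (σ : Equiv.Perm α) {g : α → ℤ} {B : Finset α}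
    (hstep : ∀ i, g (σ i) ≤ g i + 1) (hdrop : ∀ i ∈ B, g (σ i) + 1 = g i)
    (hpred : ∀ i ∈ B, g i ≤ g (σ.symm i)) : 2 * #B + 1 ≤ Fintype.card α := by
  obtain ⟨j, hjB, hj⟩ := σ.exists_notMem_apply_le (fun i hi => by linarith [hdrop i hi]) hpred
  refine two_mul_card_add_one_le_card_of_sum_eq_zero (f := fun i => g (σ i) - g i) (j := j)
    ?_ (fun i => by linarith [hstep i]) (fun i hi => by linarith [hdrop i hi]) hjB (by linarith)
  rw [sum_sub_distrib, Equiv.sum_comp σ g, sub_self]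

namespace SimpleGraph

variable {V : Type*} {G : SimpleGraph V} {u v w w' : V}

lemma Adj.dist_le_dist_add_one (h : G.Adj v w) (u : V) : G.dist v u ≤ G.dist w u + 1 := by
  have := h.reachable.dist_triangle_left u
  rwa [dist_eq_one_iff_adj.mpr h, add_comm] at this

lemma Walk.dist_le_of_mem_support {p : G.Walk v u} (hp : p.length = G.dist v u) {x : V}
    (hx : x ∈ p.support) : G.dist x u ≤ G.dist v u := by
  classical
  calc G.dist x u ≤ (p.dropUntil x hx).length := dist_le _
    _ ≤ p.length := p.length_dropUntil_le_length hx
    _ = G.dist v u := hp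

lemma dist_deleteEdges_le_of_adj_of_dist_lt (hw' : G.Adj v w') (hne : w' ≠ w)
    (hd : G.dist w' u < G.dist v u) : (G.deleteEdges {s(v, w)}).dist v u ≤ G.dist v u := by
  have hreach : G.Reachable w' u :=
    hw'.reachable.symm.trans (Reachable.of_dist_ne_zero (by omega))
  obtain ⟨p, hp⟩ := hreach.exists_walk_length_eq_dist
  have hv : v ∉ p.support := fun hv => (p.dist_le_of_mem_support hp hv).not_gt hd
  have havoid : s(v, w) ∉ (Walk.cons hw' p).edges := by
    rw [Walk.edges_cons, List.mem_cons, not_or]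
    exact ⟨fun h => hne (Sym2.congr_right.mp h).symm,
      fun h => hv (p.fst_mem_support_of_mem_edges h)⟩
  calc (G.deleteEdges {s(v, w)}).dist v u
      ≤ ((Walk.cons hw' p).toDeleteEdge _ havoid).length := dist_le _
    _ = (Walk.cons hw' p).length := Walk.length_transfer _ _
    _ = G.dist w' u + 1 := by rw [Walk.length_cons, hp]
    _ ≤ G.dist v u := hd

lemma dist_le_of_lt_dist_deleteEdges (hb : G.dist v u < (G.deleteEdges {s(v, w)}).dist v u)
    (hw' : G.Adj v w') (hne : w' ≠ w) : G.dist v u ≤ G.dist w' u := by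
  by_contra! hd
  exact (dist_deleteEdges_le_of_adj_of_dist_lt hw' hne hd).not_gt hb

lemma dist_add_one_eq_of_lt_dist_deleteEdges (h : G.Adj v w)
    (hb : G.dist v u < (G.deleteEdges {s(v, w)}).dist v u) : G.dist w u + 1 = G.dist v u := by
  have hreach : G.Reachable v u :=
    (Reachable.of_dist_ne_zero (G := G.deleteEdges {s(v, w)}) (by omega)).mono
      (G.deleteEdges_le _)
  obtain ⟨p, hp⟩ := hreach.exists_walk_length_eq_dist
  cases p with
  | nil => simp at hb
  | cons hx q =>
    rw [Walk.length_cons] at hp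
    obtain rfl : _ = w := by
      by_contra hne
      have := dist_le_of_lt_dist_deleteEdges hb hx hne
      have := dist_le q
      omega
    have := h.dist_le_dist_add_one u
    have := dist_le q
    omega

namespace Walk

variable {a : V}

lemma getVert_finRotate (p : G.Walk a a) (i : Fin p.length) :
    p.getVert (finRotate _ i) = p.getVert (i + 1) := by
  rcases Fin.val_finRotate_eq_or i with h | ⟨h1, h0⟩
  · rw [h]
  · rw [h0, h1, getVert_zero, getVert_length]

lemma IsCycle.getVert_ne_getVert_finRotate_add_one {p : G.Walk a a} (hp : p.IsCycle)
    (i : Fin p.length) : p.getVert i ≠ p.getVert (finRotate _ i + 1) := by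
  have := hp.three_le_length
  rcases Fin.val_finRotate_eq_or i with h | ⟨h1, h0⟩
  · rw [h]
    simpa using hp.getVert_sub_one_ne_getVert_add_one (i := i + 1) (by omega)
  · rw [h0]
    intro heq
    have := hp.getVert_injOn' (by simp only [Set.mem_ofPred_eq]; omega)
      (by simp only [Set.mem_ofPred_eq]; omega) heq
    omega

end Walk

end SimpleGraph

theorem few_indices_need_cycle_edge_general {V : Type*}
    (G : SimpleGraph V)
    (a : V) (c : G.Walk a a) (hc : c.IsCycle) (u : V) :
    (({i : Fin c.length |
        G.dist (c.getVert i) u <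
          (G.deleteEdges {s(c.getVert i, c.getVert (i + 1))}).dist (c.getVert i) u} :
        Set (Fin c.length)).ncard : ℝ) ≤ ((c.length : ℝ) - 1) / 2 := by
  classical
  set σ := finRotate c.length
  have hadj (i : Fin c.length) : G.Adj (c.getVert i) (c.getVert (σ i)) := by
    rw [c.getVert_finRotate]; exact c.adj_getVert_succ i.isLt
  have : Nonempty (Fin c.length) := ⟨⟨0, by have := hc.three_le_length; omega⟩⟩
  have hcard := σ.two_mul_card_add_one_le_card (g := fun i => (G.dist (c.getVert i) u : ℤ))
    (B := {i | G.dist (c.getVert i) u <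
          (G.deleteEdges {s(c.getVert i, c.getVert (i + 1))}).dist (c.getVert i) u})
    (fun i => by exact_mod_cast (hadj i).symm.dist_le_dist_add_one u)
    (fun i hi => by
      rw [mem_filter, ← c.getVert_finRotate] at hi
      exact_mod_cast dist_add_one_eq_of_lt_dist_deleteEdges (hadj i) hi.2)
    (fun i hi => by
      rw [mem_filter] at hi
      have hadj_pred := hadj (σ.symm i)
      have hne := hc.getVert_ne_getVert_finRotate_add_one (σ.symm i)
      rw [Equiv.apply_symm_apply] at hadj_pred hne
      exact_mod_cast dist_le_of_lt_dist_deleteEdges hi.2 hadj_pred.symm hne)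
  rw [Fintype.card_fin] at hcard
  rw [← coe_filter_univ, Set.ncard_coe_finset, le_div_iff₀ two_pos, le_sub_iff_add_le, mul_comm]
  exact_mod_cast hcard

/-- Let `c = v_0, v_1, …, v_k = v_0` be a cycle in a finite connected graph `G` and `u` any
vertex. Then the number of indices `i ∈ {0,…,k-1}` such that every shortest path from `v_i`
to `u` uses the edge `e_i = {v_i, v_{i+1}}` (equivalently, deleting `e_i` strictly increases
the distance from `v_i` to `u`) is at most `(k-1)/2`. -/
theorem few_indices_need_cycle_edge {V : Type*} [Fintype V]
    (G : SimpleGraph V) (hG : G.Connected)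
    (a : V) (c : G.Walk a a) (hc : c.IsCycle) (u : V) :
    (({i : Fin c.length |
        G.dist (c.getVert i) u <
          (G.deleteEdges {s(c.getVert i, c.getVert (i + 1))}).dist (c.getVert i) u} :
        Set (Fin c.length)).ncard : ℝ) ≤ ((c.length : ℝ) - 1) / 2 :=
  few_indices_need_cycle_edge_general G a c hc u
end

section
/- Let C = v_0, v_1, …, v_{k−1}, v_k = v_0 be a min-cycle in a connected graph G. Then there exist a shortest path tree T rooted at v_{⌊k/2⌋} and a shortest path tree T' rooted at v_{⌈k/2⌉} such that T_{v_{⌊k/2⌋}}(v_0) = T'_{v_{⌈k/2⌉}}(v_0). -/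
open SimpleGraph

/-- `T` is a shortest path tree of `G` rooted at `u`: a spanning tree of `G`
preserving all distances from `u`. -/
def IsSPTree {V : Type*} (G T : SimpleGraph V) (u : V) : Prop :=
  T ≤ G ∧ T.IsTree ∧ ∀ x, T.dist u x = G.dist u x

/-- `subtreeSet T u v` is `T_u(v)`: the set of vertices in the subtree of `T` (rooted at `u`)
below `v`, i.e. the vertices `x` with `d_T(u,x) = d_T(u,v) + d_T(v,x)`. -/
def subtreeSet {V : Type*} (T : SimpleGraph V) (u v : V) : Set V :=
  {x | T.dist u x = T.dist u v + T.dist v x}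

/-!
Let `a = v_{⌊k/2⌋}` and `b = v_{⌈k/2⌉}`: both lie at distance `⌊k/2⌋` from `v₀`, and `a = b` or
`a ~ b`. For a graph `G` itself, `subtreeSet G a v₀` is the set of vertices `x` such that `v₀` lies
on a geodesic from `a` to `x`; put `S = subtreeSet G a v₀ ∩ subtreeSet G b v₀`. A shortest path tree
rooted at `r` is obtained by choosing for every vertex `x ≠ r` a parent, a neighbour one step closer
to `r`, and its subtree below `v₀` is `S` as soon as parents never cross the boundary of `S` (away
from `v₀`). Such parents exist for both roots `a` and `b`, giving two trees with the same subtree.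
-/

namespace SimpleGraph

variable {V : Type*} {G : SimpleGraph V}

theorem Walk.le_add_length_of_forall_adj {φ : V → ℕ} (hφ : ∀ x y, G.Adj x y → φ y ≤ φ x + 1)
    {u v : V} (w : G.Walk u v) : φ v ≤ φ u + w.length := by
  induction w with
  | nil => simp
  | cons h _ ih =>
    have := hφ _ _ h
    rw [Walk.length_cons]
    omega

theorem Walk.dist_getVert_le_min {u : V} (c : G.Walk u u) (i : ℕ) :
    G.dist u (c.getVert i) ≤ min i (c.length - i) := by
  refine le_min ?_ ?_
  · calc G.dist u (c.getVert i) ≤ (c.take i).length := dist_le _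
      _ ≤ i := by rw [Walk.take_length]; exact min_le_left _ _
  · calc G.dist u (c.getVert i) = G.dist (c.getVert i) u := dist_comm
      _ ≤ (c.drop i).length := dist_le _
      _ = c.length - i := Walk.drop_length _ _

theorem Connected.dist_le_dist_add_one_of_adj (hG : G.Connected) {x y : V} (h : G.Adj x y)
    (u : V) : G.dist u y ≤ G.dist u x + 1 := by
  calc G.dist u y ≤ G.dist u x + G.dist x y := hG.dist_triangle
    _ = G.dist u x + 1 := by rw [dist_eq_one_iff_adj.mpr h]

theorem Connected.exists_adj_dist_add_one_eq (hG : G.Connected) {u x : V} (h : u ≠ x) :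
    ∃ y, G.Adj x y ∧ G.dist u y + 1 = G.dist u x := by
  obtain ⟨w, hw⟩ := hG.exists_walk_length_eq_dist u x
  have hnil : ¬ w.Nil := fun hnil => h hnil.eq
  refine ⟨w.penultimate, (w.adj_penultimate hnil).symm, ?_⟩
  have hle : G.dist u w.penultimate ≤ w.length - 1 := by
    simpa only [Walk.length_dropLast] using dist_le w.dropLast
  have hge := hG.dist_le_dist_add_one_of_adj (w.adj_penultimate hnil) u
  have hpos : 0 < w.length := Walk.not_nil_iff_lt_length.mp hnil
  omega

/-- The highest vertex of a cycle would have two neighbours below it. -/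
theorem isAcyclic_of_unique_lower_adj (ℓ : V → ℕ) (hne : ∀ x y, G.Adj x y → ℓ x ≠ ℓ y)
    (huniq : ∀ x y z, G.Adj x y → G.Adj x z → ℓ y < ℓ x → ℓ z < ℓ x → y = z) :
    G.IsAcyclic := by
  classical
  intro v c hc
  obtain ⟨z, hz, hmax⟩ := c.support.toFinset.exists_max_image ℓ ⟨v, by simp⟩
  rw [List.mem_toFinset] at hz
  set c' := c.rotate z hz
  have hc' : c'.IsCycle := hc.rotate hz
  have hle : ∀ y ∈ c'.support, ℓ y ≤ ℓ z := fun y hy =>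
    hmax y (by simpa [c'] using hy)
  have hsnd := c'.adj_snd hc'.not_nil
  have hpen := (c'.adj_penultimate hc'.not_nil).symm
  have hlt : ∀ y, G.Adj z y → y ∈ c'.support → ℓ y < ℓ z := fun y hy hmem =>
    lt_of_le_of_ne (hle y hmem) (hne z y hy).symm
  exact hc'.snd_ne_penultimate <| huniq z _ _ hsnd hpen
    (hlt _ hsnd (c'.getVert_mem_support 1)) (hlt _ hpen (c'.getVert_mem_support _))

end SimpleGraph

section subtreeSet

variable {V : Type*} {G : SimpleGraph V} {r v x y : V}

theorem mem_subtreeSet_self : v ∈ subtreeSet G r v := by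
  simp [subtreeSet]

theorem root_not_mem_subtreeSet (hG : G.Connected) (h : r ≠ v) : r ∉ subtreeSet G r v := by
  have := hG.pos_dist_of_ne h
  simp only [subtreeSet, Set.mem_ofPred_eq, dist_self]
  omega

theorem mem_subtreeSet_of_adj (hG : G.Connected) (hxy : G.Adj x y)
    (hd : G.dist r x = G.dist r y + 1) (hy : y ∈ subtreeSet G r v) : x ∈ subtreeSet G r v := by
  have htri : G.dist r x ≤ G.dist r v + G.dist v x := hG.dist_triangle
  have hstep := hG.dist_le_dist_add_one_of_adj hxy.symm v
  simp only [subtreeSet, Set.mem_ofPred_eq] at hy ⊢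
  omega

theorem dist_add_one_eq_and_mem_subtreeSet (hG : G.Connected) (hx : x ∈ subtreeSet G r v)
    (hxy : G.Adj x y) (hy : G.dist v y + 1 = G.dist v x) :
    G.dist r y + 1 = G.dist r x ∧ y ∈ subtreeSet G r v := by
  have htri : G.dist r y ≤ G.dist r v + G.dist v y := hG.dist_triangle
  have hstep := hG.dist_le_dist_add_one_of_adj hxy.symm r
  simp only [subtreeSet, Set.mem_ofPred_eq] at hx ⊢
  omega

end subtreeSet

namespace SimpleGraph

variable {V : Type*} {G : SimpleGraph V} {r : V} {p : V → V}

structure IsParentMap (G : SimpleGraph V) (r : V) (p : V → V) : Prop where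
  adj : ∀ x ≠ r, G.Adj x (p x)
  dist_add_one : ∀ x ≠ r, G.dist r (p x) + 1 = G.dist r x

def parentGraph (p : V → V) (r : V) : SimpleGraph V :=
  fromRel fun x y => x ≠ r ∧ y = p x

theorem parentGraph_adj {x y : V} :
    (parentGraph p r).Adj x y ↔ x ≠ y ∧ ((x ≠ r ∧ y = p x) ∨ (y ≠ r ∧ x = p y)) :=
  fromRel_adj _ x y

namespace IsParentMap

theorem adj_parentGraph (hp : IsParentMap G r p) {x : V} (hx : x ≠ r) :
    (parentGraph p r).Adj x (p x) := by
  refine parentGraph_adj.mpr ⟨fun h => ?_, .inl ⟨hx, rfl⟩⟩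
  have := hp.dist_add_one x hx
  rw [← h] at this
  omega

theorem parentGraph_le (hp : IsParentMap G r p) : parentGraph p r ≤ G := by
  intro x y h
  obtain ⟨-, ⟨hx, rfl⟩ | ⟨hy, rfl⟩⟩ := parentGraph_adj.mp h
  · exact hp.adj x hx
  · exact (hp.adj y hy).symm

theorem eq_of_adj_parentGraph_of_dist_lt (hp : IsParentMap G r p) {x y : V}
    (h : (parentGraph p r).Adj x y) (hlt : G.dist r y < G.dist r x) : y = p x := by
  obtain ⟨-, ⟨-, rfl⟩ | ⟨hy, rfl⟩⟩ := parentGraph_adj.mp h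
  · rfl
  · have := hp.dist_add_one y hy
    omega

theorem exists_walk_parentGraph (hp : IsParentMap G r p) (x : V) :
    ∃ w : (parentGraph p r).Walk x r, w.length = G.dist r x := by
  induction hn : G.dist r x using Nat.strong_induction_on generalizing x with
  | _ n ih =>
    by_cases hx : x = r
    · subst hx
      exact ⟨.nil, by simp_all⟩
    · have hd := hp.dist_add_one x hx
      obtain ⟨w, hw⟩ := ih _ (by omega) (p x) rfl
      exact ⟨.cons (hp.adj_parentGraph hx) w, by simp only [Walk.length_cons]; omega⟩

theorem connected_parentGraph (hp : IsParentMap G r p) : (parentGraph p r).Connected :=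
  have : Nonempty V := ⟨r⟩
  .mk fun x y =>
    ((hp.exists_walk_parentGraph x).elim fun w _ => w.reachable).trans
      ((hp.exists_walk_parentGraph y).elim fun w _ => w.reachable).symm

theorem dist_parentGraph (hp : IsParentMap G r p) (x : V) :
    (parentGraph p r).dist r x = G.dist r x := by
  obtain ⟨w, hw⟩ := hp.exists_walk_parentGraph x
  have hle : (parentGraph p r).dist r x ≤ G.dist r x := by
    rw [dist_comm, ← hw]
    exact dist_le w
  have hge : G.dist r x ≤ (parentGraph p r).dist r x :=
    (hp.connected_parentGraph r x).dist_anti hp.parentGraph_le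
  omega

theorem isAcyclic_parentGraph (hp : IsParentMap G r p) : (parentGraph p r).IsAcyclic := by
  refine isAcyclic_of_unique_lower_adj (G.dist r) (fun x y h => ?_) fun x y z hy hz hyx hzx =>
    (hp.eq_of_adj_parentGraph_of_dist_lt hy hyx).trans
      (hp.eq_of_adj_parentGraph_of_dist_lt hz hzx).symm
  obtain ⟨-, ⟨hx, rfl⟩ | ⟨hy, rfl⟩⟩ := parentGraph_adj.mp h
  · have := hp.dist_add_one x hx
    omega
  · have := hp.dist_add_one y hy
    omega

theorem isSPTree_parentGraph (hp : IsParentMap G r p) : IsSPTree G (parentGraph p r) r :=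
  ⟨hp.parentGraph_le, ⟨hp.connected_parentGraph, hp.isAcyclic_parentGraph⟩, hp.dist_parentGraph⟩

theorem mem_subtreeSet_parentGraph_iff (hp : IsParentMap G r p) {v x : V} (hxr : x ≠ r)
    (hxv : x ≠ v) :
    x ∈ subtreeSet (parentGraph p r) r v ↔ p x ∈ subtreeSet (parentGraph p r) r v := by
  have hT := hp.connected_parentGraph
  have hdist : (parentGraph p r).dist r x = (parentGraph p r).dist r (p x) + 1 := by
    rw [hp.dist_parentGraph, hp.dist_parentGraph, hp.dist_add_one x hxr]
  refine ⟨fun hx => ?_, mem_subtreeSet_of_adj hT (hp.adj_parentGraph hxr) hdist⟩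
  obtain ⟨z, hxz, hz⟩ := hT.exists_adj_dist_add_one_eq hxv.symm
  obtain ⟨hzx, hzmem⟩ := dist_add_one_eq_and_mem_subtreeSet hT hx hxz hz
  rw [hp.dist_parentGraph, hp.dist_parentGraph] at hzx
  rwa [← hp.eq_of_adj_parentGraph_of_dist_lt hxz (by omega)]

theorem subtreeSet_parentGraph_eq (hp : IsParentMap G r p) {v : V} {S : Set V} (hv : v ∈ S)
    (hr : r ∉ S) (hS : ∀ x ≠ r, x ≠ v → (p x ∈ S ↔ x ∈ S)) :
    subtreeSet (parentGraph p r) r v = S := by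
  ext x
  induction hn : G.dist r x using Nat.strong_induction_on generalizing x with
  | _ n ih =>
    by_cases hxv : x = v
    · subst hxv
      exact iff_of_true mem_subtreeSet_self hv
    by_cases hxr : x = r
    · rw [hxr] at hxv ⊢
      exact iff_of_false (root_not_mem_subtreeSet hp.connected_parentGraph hxv) hr
    rw [hp.mem_subtreeSet_parentGraph_iff hxr hxv, ← hS x hxr hxv]
    exact ih _ (by have := hp.dist_add_one x hxr; omega) (p x) rfl

end IsParentMap

theorem exists_isSPTree_subtreeSet_eq (hG : G.Connected) {v : V} {S : Set V} (hv : v ∈ S)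
    (hr : r ∉ S)
    (hS : ∀ x ≠ r, x ≠ v → ∃ y, G.Adj x y ∧ G.dist r y + 1 = G.dist r x ∧ (y ∈ S ↔ x ∈ S)) :
    ∃ T, IsSPTree G T r ∧ subtreeSet T r v = S := by
  have hparent : ∀ x, ∃ y, x ≠ r →
      G.Adj x y ∧ G.dist r y + 1 = G.dist r x ∧ (x ≠ v → (y ∈ S ↔ x ∈ S)) := by
    intro x
    by_cases hxr : x = r
    · exact ⟨x, fun h => absurd hxr h⟩
    by_cases hxv : x = v
    · obtain ⟨y, hxy, hy⟩ := hG.exists_adj_dist_add_one_eq (Ne.symm hxr)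
      exact ⟨y, fun _ => ⟨hxy, hy, fun h => absurd hxv h⟩⟩
    · obtain ⟨y, hy⟩ := hS x hxr hxv
      exact ⟨y, fun _ => ⟨hy.1, hy.2.1, fun _ => hy.2.2⟩⟩
  choose p hp using hparent
  have hpm : IsParentMap G r p := ⟨fun x hx => (hp x hx).1, fun x hx => (hp x hx).2.1⟩
  exact ⟨parentGraph p r, hpm.isSPTree_parentGraph,
    hpm.subtreeSet_parentGraph_eq hv hr fun x hxr hxv => (hp x hxr).2.2 hxv⟩

end SimpleGraph

section minCycle

variable {V : Type*} {G : SimpleGraph V} {v0 : V} {c : G.Walk v0 v0}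

/-- Along the edges of the cycle, the cyclic distance `min j (k - j)` from `v₀` to `v_j` is
`1`-Lipschitz; the min-cycle property transfers the resulting lower bound to `G`. -/
theorem IsMinCycle.min_le_dist_getVert (hmc : IsMinCycle c) {i : ℕ} (hi : i ≤ c.length) :
    min i (c.length - i) ≤ G.dist v0 (c.getVert i) := by
  let idx := Function.invFunOn c.getVert {j | j ≤ c.length - 1}
  let φ : V → ℕ := fun x => min (idx x) (c.length - idx x)
  have hidx0 : idx v0 = 0 := by
    simpa using hmc.1.getVert_injOn'.leftInvOn_invFunOn (Nat.zero_le (c.length - 1))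
  have hφ0 : φ v0 = 0 := by simp [φ, hidx0]
  have hφ : ∀ j ≤ c.length, φ (c.getVert j) = min j (c.length - j) := fun j hj => by
    rcases Nat.lt_or_eq_of_le hj with hj | rfl
    · have hj' : j ≤ c.length - 1 := by omega
      simp only [φ, idx, hmc.1.getVert_injOn'.leftInvOn_invFunOn hj']
    · simp [hφ0]
  have hlip : ∀ x y, (fromEdgeSet {e | e ∈ c.edges}).Adj x y → φ y ≤ φ x + 1 := by
    intro x y h
    obtain ⟨t, ht, he⟩ := c.mk_mem_edges_iff_exists.mp h.1
    have h1 := hφ t ht.le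
    have h2 := hφ (t + 1) ht
    rcases Sym2.eq_iff.mp he with ⟨hx, hy⟩ | ⟨hx, hy⟩ <;> rw [← hx, ← hy] <;> omega
  by_cases hv : c.getVert i = v0
  · rcases (hmc.1.getVert_endpoint_iff hi).mp hv with rfl | rfl <;> simp
  have hCG := hmc.2 _ c.start_mem_support _ (c.getVert_mem_support i)
  have hpos : 0 < G.dist v0 (c.getVert i) := (c.take i).reachable.pos_dist_of_ne (Ne.symm hv)
  obtain ⟨w, hw⟩ := exists_walk_of_dist_ne_zero (hCG ▸ hpos.ne')
  have := w.le_add_length_of_forall_adj hlip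
  rw [hφ i hi, hφ0, hw, hCG] at this
  omega

theorem IsMinCycle.dist_getVert (hmc : IsMinCycle c) {i : ℕ} (hi : i ≤ c.length) :
    G.dist v0 (c.getVert i) = min i (c.length - i) :=
  le_antisymm (c.dist_getVert_le_min i) (hmc.min_le_dist_getVert hi)

end minCycle

section geodesicShadow

variable {V : Type*} {G : SimpleGraph V} {a b v x : V}

/-- Here `d(a, x) = d(b, x) + 1`, so a step from `x` towards `b` is also a step towards `a`. -/
theorem exists_adj_not_mem_subtreeSet_of_adj_root (hG : G.Connected) (hab : G.Adj a b)
    (hd : G.dist a v = G.dist b v) (hxa : x ∈ subtreeSet G a v)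
    (hxb : x ∉ subtreeSet G b v) :
    ∃ y, G.Adj x y ∧ G.dist a y + 1 = G.dist a x ∧ y ∉ subtreeSet G b v := by
  have hbx : b ≠ x := by
    rintro rfl
    have hxa' : G.dist a b = G.dist a v + G.dist v b := hxa
    rw [dist_eq_one_iff_adj.mpr hab, dist_comm (u := v), ← hd] at hxa'
    omega
  obtain ⟨y, hxy, hy⟩ := hG.exists_adj_dist_add_one_eq hbx
  have hbxv : G.dist b x ≤ G.dist b v + G.dist v x := hG.dist_triangle
  have hay : G.dist a y ≤ G.dist a b + G.dist b y := hG.dist_triangle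
  have hax := hG.dist_le_dist_add_one_of_adj hxy.symm a
  simp only [subtreeSet, Set.mem_ofPred_eq, dist_eq_one_iff_adj.mpr hab] at hxa hxb hay
  refine ⟨y, hxy, by omega, fun hyb => hxb ?_⟩
  exact mem_subtreeSet_of_adj hG hxy hy.symm hyb

theorem exists_adj_dist_add_one_mem_inter_iff (hG : G.Connected) (hab : a = b ∨ G.Adj a b)
    (hd : G.dist a v = G.dist b v) (hxa : x ≠ a) (hxv : x ≠ v) :
    ∃ y, G.Adj x y ∧ G.dist a y + 1 = G.dist a x ∧
      (y ∈ subtreeSet G a v ∩ subtreeSet G b v ↔ x ∈ subtreeSet G a v ∩ subtreeSet G b v) := by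
  by_cases hx : x ∈ subtreeSet G a v ∩ subtreeSet G b v
  · obtain ⟨y, hxy, hy⟩ := hG.exists_adj_dist_add_one_eq (Ne.symm hxv)
    obtain ⟨hay, hya⟩ := dist_add_one_eq_and_mem_subtreeSet hG hx.1 hxy hy
    exact ⟨y, hxy, hay, iff_of_true ⟨hya, (dist_add_one_eq_and_mem_subtreeSet hG hx.2 hxy hy).2⟩ hx⟩
  by_cases hxa' : x ∈ subtreeSet G a v
  · have hxb : x ∉ subtreeSet G b v := fun hxb => hx ⟨hxa', hxb⟩
    have hab' : G.Adj a b := hab.resolve_left (by rintro rfl; exact hxb hxa')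
    obtain ⟨y, hxy, hy, hyb⟩ := exists_adj_not_mem_subtreeSet_of_adj_root hG hab' hd hxa' hxb
    exact ⟨y, hxy, hy, iff_of_false (fun h => hyb h.2) hx⟩
  · obtain ⟨y, hxy, hy⟩ := hG.exists_adj_dist_add_one_eq (Ne.symm hxa)
    refine ⟨y, hxy, hy, iff_of_false (fun h => hxa' ?_) hx⟩
    exact mem_subtreeSet_of_adj hG hxy hy.symm h.1

end geodesicShadow

theorem floor_ceil_subtrees_equal_general {V : Type*}
    (G : SimpleGraph V) (hG : G.Connected)
    (v0 : V) (c : G.Walk v0 v0) (hmc : IsMinCycle c) :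
    ∃ T T' : SimpleGraph V,
      IsSPTree G T (c.getVert (c.length / 2)) ∧
      IsSPTree G T' (c.getVert ((c.length + 1) / 2)) ∧
      subtreeSet T (c.getVert (c.length / 2)) v0 =
        subtreeSet T' (c.getVert ((c.length + 1) / 2)) v0 := by
  set a := c.getVert (c.length / 2)
  set b := c.getVert ((c.length + 1) / 2)
  have hk := hmc.1.three_le_length
  have hda : G.dist a v0 = c.length / 2 := by
    rw [dist_comm, hmc.dist_getVert (by omega)]
    omega
  have hdb : G.dist b v0 = c.length / 2 := by
    rw [dist_comm, hmc.dist_getVert (by omega)]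
    omega
  have hav : a ≠ v0 := fun h => by rw [h, dist_self] at hda; omega
  have hbv : b ≠ v0 := fun h => by rw [h, dist_self] at hdb; omega
  have hab : a = b ∨ G.Adj a b := by
    rcases Nat.even_or_odd c.length with ⟨n, hn⟩ | ⟨n, hn⟩
    · exact .inl (congrArg c.getVert (by omega))
    · have : (c.length + 1) / 2 = c.length / 2 + 1 := by omega
      exact .inr (by simpa only [a, b, this] using c.adj_getVert_succ (by omega))
  set S := subtreeSet G a v0 ∩ subtreeSet G b v0
  have hv0 : v0 ∈ S := ⟨mem_subtreeSet_self, mem_subtreeSet_self⟩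
  obtain ⟨T, hT, hTS⟩ := exists_isSPTree_subtreeSet_eq hG hv0
    (fun h => root_not_mem_subtreeSet hG hav h.1) fun x hxa hxv =>
      exists_adj_dist_add_one_mem_inter_iff hG hab (hda.trans hdb.symm) hxa hxv
  obtain ⟨T', hT', hTS'⟩ := exists_isSPTree_subtreeSet_eq hG hv0
    (fun h => root_not_mem_subtreeSet hG hbv h.2) fun x hxb hxv => by
      simpa only [S, Set.inter_comm] using
        exists_adj_dist_add_one_mem_inter_iff hG (hab.imp Eq.symm Adj.symm)
          (hdb.trans hda.symm) hxb hxv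
  exact ⟨T, T', hT, hT', hTS.trans hTS'.symm⟩

/-- For a min-cycle `c = v_0, …, v_k = v_0` in a finite connected graph `G`, there are
shortest path trees `T` rooted at `v_{⌊k/2⌋}` and `T'` rooted at `v_{⌈k/2⌉}` such that
`T_{v_{⌊k/2⌋}}(v_0) = T'_{v_{⌈k/2⌉}}(v_0)`. -/
theorem floor_ceil_subtrees_equal {V : Type*} [Fintype V]
    (G : SimpleGraph V) (hG : G.Connected)
    (v0 : V) (c : G.Walk v0 v0) (hmc : IsMinCycle c) :
    ∃ T T' : SimpleGraph V,
      IsSPTree G T (c.getVert (c.length / 2)) ∧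
      IsSPTree G T' (c.getVert ((c.length + 1) / 2)) ∧
      subtreeSet T (c.getVert (c.length / 2)) v0 =
        subtreeSet T' (c.getVert ((c.length + 1) / 2)) v0 :=
  floor_ceil_subtrees_equal_general G hG v0 c hmc
end
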